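/- (At most two maximal grade-0 chains.) Let L be a finite set of messages, all of strictly positive weight. Then there do not exist three pairwise incompatible chains each having grade 0 at L; consequently, the set of maximal grade-0 chains at L contains at most two elements. -/
import Mathlib


open scoped Classical

/-- The weight of the messages in `L` whose vote extends (has as a prefix) the chain `Λ`. -/
noncomputable def extWeight {Msg B : Type*} (w : Msg → ℝ) (vote : Msg → List B)
    (L : Finset Msg) (Λ : List B) : ℝ :=
  ∑ m ∈ L, if Λ <+: vote m then w m else 0

/-- A chain `Λ` has grade 0 at `L` if the votes for extensions of `Λ` account for strictly
more than one third of the weight of `L`. -/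
def Grade0 {Msg B : Type*} (w : Msg → ℝ) (vote : Msg → List B)
    (L : Finset Msg) (Λ : List B) : Prop :=
  (1 / 3 : ℝ) * ∑ m ∈ L, w m < extWeight w vote L Λ

/-- A chain `Λ` is a maximal grade-0 chain at `L` if it has grade 0 at `L` and no strict
extension of it has grade 0 at `L`. -/
def MaximalGrade0 {Msg B : Type*} (w : Msg → ℝ) (vote : Msg → List B)
    (L : Finset Msg) (Λ : List B) : Prop :=
  Grade0 w vote L Λ ∧ ∀ Λ' : List B, Λ <+: Λ' → Λ' ≠ Λ → ¬Grade0 w vote L Λ'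

/-- Two chains are compatible if one is a prefix of the other. -/
def Compatible {B : Type*} (Λ Λ' : List B) : Prop :=
  Λ <+: Λ' ∨ Λ' <+: Λ

/-- At most two maximal grade-0 chains: there are no three pairwise incompatible chains each
having grade 0 at `L`; consequently, the set of maximal grade-0 chains at `L` has at most two
elements. -/
theorem at_most_two_maximal_grade0 {Msg B : Type*} [DecidableEq Msg]
    (w : Msg → ℝ) (vote : Msg → List B) (hw : ∀ m : Msg, 0 < w m)
    (L : Finset Msg) :
    (¬∃ Λ₁ Λ₂ Λ₃ : List B,
      Grade0 w vote L Λ₁ ∧ Grade0 w vote L Λ₂ ∧ Grade0 w vote L Λ₃ ∧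
      ¬Compatible Λ₁ Λ₂ ∧ ¬Compatible Λ₁ Λ₃ ∧ ¬Compatible Λ₂ Λ₃) ∧
    (∀ Λ₁ Λ₂ Λ₃ : List B,
      MaximalGrade0 w vote L Λ₁ → MaximalGrade0 w vote L Λ₂ → MaximalGrade0 w vote L Λ₃ →
      Λ₁ = Λ₂ ∨ Λ₁ = Λ₃ ∨ Λ₂ = Λ₃) := by
  have key : ¬∃ Λ₁ Λ₂ Λ₃ : List B,
      Grade0 w vote L Λ₁ ∧ Grade0 w vote L Λ₂ ∧ Grade0 w vote L Λ₃ ∧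
      ¬Compatible Λ₁ Λ₂ ∧ ¬Compatible Λ₁ Λ₃ ∧ ¬Compatible Λ₂ Λ₃ := by
    rintro ⟨Λ₁, Λ₂, Λ₃, h1, h2, h3, c12, c13, c23⟩
    have hbound : extWeight w vote L Λ₁ + extWeight w vote L Λ₂ + extWeight w vote L Λ₃
        ≤ ∑ m ∈ L, w m := by
      unfold extWeight
      rw [← Finset.sum_add_distrib, ← Finset.sum_add_distrib]
      apply Finset.sum_le_sum
      intro m _
      have hwm := (hw m).le
      by_cases p1 : Λ₁ <+: vote m <;> by_cases p2 : Λ₂ <+: vote m <;>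
        by_cases p3 : Λ₃ <+: vote m <;> simp [p1, p2, p3, hwm] <;>
        first
        | exact absurd (List.prefix_or_prefix_of_prefix p1 p2) c12
        | exact absurd (List.prefix_or_prefix_of_prefix p1 p3) c13
        | exact absurd (List.prefix_or_prefix_of_prefix p2 p3) c23
    have := add_lt_add (add_lt_add h1 h2) h3
    unfold Grade0 at h1 h2 h3
    nlinarith [h1, h2, h3, hbound]
  refine ⟨key, ?_⟩
  intro Λ₁ Λ₂ Λ₃ m1 m2 m3
  by_contra h
  push_neg at h
  obtain ⟨e12, e13, e23⟩ := h
  have incomp : ∀ Λ Λ' : List B, MaximalGrade0 w vote L Λ → MaximalGrade0 w vote L Λ' →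
      Λ ≠ Λ' → ¬Compatible Λ Λ' := by
    rintro Λ Λ' ⟨g, hm⟩ ⟨g', hm'⟩ hne (hp | hp)
    · exact hm Λ' hp (fun e => hne e.symm) g'
    · exact hm' Λ hp hne g
  exact key ⟨Λ₁, Λ₂, Λ₃, m1.1, m2.1, m3.1, incomp _ _ m1 m2 e12,
    incomp _ _ m1 m3 e13, incomp _ _ m2 m3 e23⟩
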